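/- arXiv:math/0205302 — 3 statements merged into one kernel-verified Lean document; each statement's English description precedes it below -/
import Mathlib

section
/- For all integers d ≥ 0 and m ≥ 0, the homogeneous system L_d(m^4) is non-special: there exist four points p₁, p₂, p₃, p₄ ∈ ℂ² such that the space of polynomials of degree ≤ d with multiplicity at least m at each pᵢ has dimension max(0, (d+1)(d+2)/2 − 4·m(m+1)/2). -/
open MvPolynomial Module

/-- The submodule of polynomials in two variables all of whose monomials have total
degree at most `d` (for `d = -1` this is the zero space, matching the convention
that `L₋₁` is the zero system). -/
noncomputable def degLE (d : ℤ) : Submodule ℂ (MvPolynomial (Fin 2) ℂ) :=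
  MvPolynomial.restrictSupport ℂ {s : Fin 2 →₀ ℕ | ((s.sum fun _ e => e : ℕ) : ℤ) ≤ d}

/-- The submodule of polynomials having multiplicity at least `m` at the point `p`:
every partial derivative of order `< m` (i.e. `∂ₓᵃ ∂ᵧᵇ` with `a + b < m`)
vanishes at `p`. -/
noncomputable def multAtLeast (p : Fin 2 → ℂ) (m : ℕ) :
    Submodule ℂ (MvPolynomial (Fin 2) ℂ) :=
  ⨅ (a : ℕ) (b : ℕ) (_ : a + b < m),
    LinearMap.ker ((MvPolynomial.aeval p).toLinearMap ∘ₗ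
      (((MvPolynomial.pderiv (0 : Fin 2)).toLinearMap ^ a) ∘ₗ
       ((MvPolynomial.pderiv (1 : Fin 2)).toLinearMap ^ b)))

/-- The affine model of the linear system `L_d(m; p₁,…,pₙ)`: polynomials of total
degree at most `d` with multiplicity at least `m` at each point `p i`. -/
noncomputable def linSys (d : ℤ) (m : ℕ) {n : ℕ} (p : Fin n → Fin 2 → ℂ) :
    Submodule ℂ (MvPolynomial (Fin 2) ℂ) :=
  degLE d ⊓ ⨅ i, multAtLeast (p i) m

/-- The expected (vector-space) dimension `max (0, (d+1)(d+2)/2 − n·m(m+1)/2)`. -/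
def expectedDim (d : ℤ) (m n : ℕ) : ℤ :=
  max 0 ((d + 1) * (d + 2) / 2 - (n : ℤ) * ((m : ℤ) * ((m : ℤ) + 1)) / 2)

/-- The homogeneous system `L_d(m^n)` is non-special: for some choice of `n` points
the dimension of the linear system equals the expected dimension (the dimension for
a general choice of points attains its minimum, so this is equivalent to the generic
dimension equalling the expected dimension). -/
def NonSpecial (d : ℤ) (m n : ℕ) : Prop :=
  ∃ p : Fin n → Fin 2 → ℂ,
    (Module.finrank ℂ ↥(linSys d m p) : ℤ) = expectedDim d m n

section LinAlg

variable {E F : Type*} [AddCommGroup E] [Module ℂ E] [AddCommGroup F] [Module ℂ F]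

lemma finrank_le_add (V U : Submodule ℂ E) (Z : Submodule ℂ F) (φ : E →ₗ[ℂ] F)
    [FiniteDimensional ℂ V] [FiniteDimensional ℂ U] [FiniteDimensional ℂ Z]
    (h1 : V ⊓ LinearMap.ker φ ≤ U) (h2 : ∀ f ∈ V, φ f ∈ Z) :
    finrank ℂ V ≤ finrank ℂ U + finrank ℂ Z := by
  classical
  let φ' : V →ₗ[ℂ] Z := LinearMap.codRestrict Z (φ ∘ₗ V.subtype) (fun x => h2 x x.2)
  have h3 := LinearMap.finrank_range_add_finrank_ker φ'
  have hker : finrank ℂ (LinearMap.ker φ') ≤ finrank ℂ U := by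
    have hmem : ∀ x : LinearMap.ker φ', ((x : V) : E) ∈ U := by
      intro x
      refine h1 ⟨(x : V).2, ?_⟩
      have h0 := x.2
      rw [LinearMap.mem_ker] at h0
      have h4 : ((φ' (x : V) : Z) : F) = ((0 : Z) : F) := congrArg Subtype.val h0
      have h5 : ((φ' (x : V) : Z) : F) = φ ((x : V) : E) := rfl
      have : φ ((x : V) : E) = 0 := by rw [← h5, h4, Submodule.coe_zero]
      exact this
    let ι : LinearMap.ker φ' →ₗ[ℂ] U :=
      LinearMap.codRestrict U (V.subtype ∘ₗ (LinearMap.ker φ').subtype) hmem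
    have hinj : Function.Injective ι := by
      intro a b hab
      have h5 : ((ι a : U) : E) = ((ι b : U) : E) := congrArg Subtype.val hab
      have h6 : ((a : V) : E) = ((b : V) : E) := h5
      exact Subtype.ext (Subtype.ext h6)
    exact LinearMap.finrank_le_finrank_of_injective hinj
  have hrange : finrank ℂ (LinearMap.range φ') ≤ finrank ℂ Z :=
    (LinearMap.range φ').finrank_le
  omega

lemma finrank_le_inf_ker_add_one (V : Submodule ℂ E) (φ : E →ₗ[ℂ] ℂ)
    [FiniteDimensional ℂ V] :
    finrank ℂ V ≤ finrank ℂ (V ⊓ LinearMap.ker φ : Submodule ℂ E) + 1 := by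
  haveI : FiniteDimensional ℂ (V ⊓ LinearMap.ker φ : Submodule ℂ E) :=
    Submodule.finiteDimensional_of_le inf_le_left
  have := finrank_le_add V (V ⊓ LinearMap.ker φ) (⊤ : Submodule ℂ ℂ) φ le_rfl
    (fun f _ => trivial)
  simpa using this

lemma finrank_le_inf_iInf_ker {ι : Type*} [DecidableEq ι] (V : Submodule ℂ E)
    [FiniteDimensional ℂ V] (φ : ι → E →ₗ[ℂ] ℂ) (s : Finset ι) :
    finrank ℂ V ≤ finrank ℂ (V ⊓ ⨅ x ∈ s, LinearMap.ker (φ x) : Submodule ℂ E) + s.card := by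
  classical
  induction s using Finset.induction with
  | empty =>
    have : V ⊓ ⨅ x ∈ (∅ : Finset ι), LinearMap.ker (φ x) = V := by simp
    rw [this]; simp
  | @insert a s ha ih =>
    haveI : FiniteDimensional ℂ (V ⊓ ⨅ x ∈ s, LinearMap.ker (φ x) : Submodule ℂ E) :=
      Submodule.finiteDimensional_of_le inf_le_left
    have step := finrank_le_inf_ker_add_one (V ⊓ ⨅ x ∈ s, LinearMap.ker (φ x)) (φ a)
    have heq : (V ⊓ ⨅ x ∈ s, LinearMap.ker (φ x)) ⊓ LinearMap.ker (φ a)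
        = V ⊓ ⨅ x ∈ insert a s, LinearMap.ker (φ x) := by
      simp only [Finset.iInf_insert]
      rw [inf_assoc, inf_comm (⨅ x ∈ s, LinearMap.ker (φ x)) (LinearMap.ker (φ a))]
    rw [heq] at step
    rw [Finset.card_insert_of_notMem ha]
    omega

end LinAlg

section Count

lemma gauss_sum (K : ℕ) : 2 * (∑ a ∈ Finset.range K, (K - a)) = K * (K + 1) := by
  induction K with
  | zero => simp
  | succ n ih =>
    rw [Finset.sum_range_succ]
    have h1 : ∑ a ∈ Finset.range n, (n + 1 - a) = ∑ a ∈ Finset.range n, ((n - a) + 1) :=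
      Finset.sum_congr rfl fun a ha => by
        have := Finset.mem_range.mp ha; omega
    rw [h1, Finset.sum_add_distrib, Finset.sum_const, Finset.card_range]
    simp only [smul_eq_mul, mul_one]
    have h2 : 2 * ((∑ a ∈ Finset.range n, (n - a) + n) + (n + 1 - n)) =
        2 * (∑ a ∈ Finset.range n, (n - a)) + 2 * n + 2 := by omega
    rw [h2, ih]
    ring

/-- The triangle as a finset of pairs. -/
def triangle (K : ℕ) : Finset (ℕ × ℕ) :=
  (Finset.range K).biUnion (fun a => ({a} : Finset ℕ) ×ˢ Finset.range (K - a))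

lemma mem_triangle (K : ℕ) (p : ℕ × ℕ) : p ∈ triangle K ↔ p.1 + p.2 < K := by
  simp only [triangle, Finset.mem_biUnion, Finset.mem_range, Finset.mem_product,
    Finset.mem_singleton]
  constructor
  · rintro ⟨a, ha, h1, h2⟩; omega
  · intro h; exact ⟨p.1, by omega, rfl, by omega⟩

lemma card_triangle (K : ℕ) : 2 * (triangle K).card = K * (K + 1) := by
  rw [triangle, Finset.card_biUnion]
  · have h1 : ∀ a ∈ Finset.range K,
        (({a} : Finset ℕ) ×ˢ Finset.range (K - a)).card = K - a := by
      intro a _; rw [Finset.card_product, Finset.card_singleton, Finset.card_range, one_mul]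
    rw [Finset.sum_congr rfl h1]
    exact gauss_sum K
  · intro x _ y _ hxy
    simp only [Function.onFun]
    rw [Finset.disjoint_left]
    rintro p hp hq
    rw [Finset.mem_product, Finset.mem_singleton] at hp hq
    exact hxy (hp.1 ▸ hq.1 ▸ rfl)

lemma two_mul_finrank_rtd (n : ℕ) :
    2 * finrank ℂ (restrictTotalDegree (Fin 2) ℂ n) = (n + 1) * (n + 2) := by
  have hsum : ∀ s : Fin 2 →₀ ℕ, (s.sum fun _ e => e) = s 0 + s 1 := by
    intro s
    rw [Finsupp.sum_fintype]
    · exact Fin.sum_univ_two _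
    · intro _; rfl
  set S : Set (Fin 2 →₀ ℕ) := {s : Fin 2 →₀ ℕ | (s.sum fun _ e => e) ≤ n} with hS
  have E1 : ↥S ≃ ↥(triangle (n + 1)) := by
    refine ⟨fun x => ⟨(x.1 0, x.1 1), ?_⟩, fun y =>
      ⟨Finsupp.equivFunOnFinite.symm ![y.1.1, y.1.2], ?_⟩, ?_, ?_⟩
    · rw [mem_triangle]
      have := x.2
      rw [Set.mem_setOf_eq, hsum] at this
      omega
    · have hy := (mem_triangle _ _).mp y.2
      rw [Set.mem_setOf_eq, hsum]
      simp only [Finsupp.coe_equivFunOnFinite_symm, Matrix.cons_val_zero,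
        Matrix.cons_val_one, Matrix.head_cons]
      omega
    · intro x
      apply Subtype.ext
      ext i
      fin_cases i <;> simp
    · intro y
      apply Subtype.ext
      apply Prod.ext <;> simp
  haveI : Fintype ↥S := Fintype.ofEquiv _ E1.symm
  have hfr : finrank ℂ (restrictTotalDegree (Fin 2) ℂ n) = Fintype.card ↥S :=
    Module.finrank_eq_card_basis (MvPolynomial.basisRestrictSupport ℂ S)
  rw [hfr, Fintype.card_congr E1, Fintype.card_coe, card_triangle]

end Count

section Poly

noncomputable section

abbrev R2 : Type := MvPolynomial (Fin 2) ℂ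

/-- Substituting `y := c` (and renaming `x` to the univariate variable). -/
def Ac (c : ℂ) : R2 →ₐ[ℂ] Polynomial ℂ :=
  MvPolynomial.aeval ![Polynomial.X, Polynomial.C c]

lemma X1_sub_C_ne_zero (c : ℂ) : (X 1 - C c : R2) ≠ 0 := by
  intro h
  have h2 := congrArg (MvPolynomial.eval ![0, c + 1]) h
  simp at h2

lemma totalDegree_X1subC_mul {c : ℂ} {g : R2} (hg : g ≠ 0) :
    g.totalDegree + 1 ≤ ((X 1 - C c) * g).totalDegree := by
  obtain ⟨s, hs, hds⟩ := Finset.exists_mem_eq_sup g.support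
    (support_nonempty.mpr hg) (fun s => s.sum fun _ e => e)
  have hdg : g.totalDegree = s.sum fun _ e => e := hds
  have hsum1 : ((Finsupp.single (1 : Fin 2) 1 + s).sum fun _ e => e)
      = (s.sum fun _ e => e) + 1 := by
    rw [Finsupp.sum_add_index (h := fun _ e => e)]
    · rw [Finsupp.sum_single_index]; · ring
      rfl
    · intro _ _; rfl
    · intro _ _ _ _; rfl
  have hzero : coeff (Finsupp.single 1 1 + s) g = 0 := by
    apply coeff_eq_zero_of_totalDegree_lt
    set t : Fin 2 →₀ ℕ := Finsupp.single (1 : Fin 2) 1 + s with ht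
    have h6 : (t.sum fun _ e => e) = ∑ i ∈ t.support, t i := rfl
    rw [← h6, ht, hsum1, hdg]
    omega
  have hkey : coeff (Finsupp.single 1 1 + s) ((X 1 - C c) * g) = coeff s g := by
    rw [sub_mul, coeff_sub, coeff_X_mul, coeff_C_mul, hzero]
    ring
  have hmem : Finsupp.single 1 1 + s ∈ ((X 1 - C c) * g).support := by
    rw [MvPolynomial.mem_support_iff, hkey]
    exact MvPolynomial.mem_support_iff.mp hs
  have h3 := le_totalDegree hmem
  rw [hsum1] at h3
  rw [hdg]
  omega

/-- `ψ l = y^⌈l/2⌉ (y-1)^⌊l/2⌋`. -/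
def psi (l : ℕ) : R2 := (X 1) ^ ((l + 1) / 2) * (X 1 - C 1) ^ (l / 2)

lemma psi_zero : psi 0 = 1 := by simp [psi]

lemma psi_even (k : ℕ) : psi (2 * k) = (X 1) ^ k * (X 1 - C 1) ^ k := by
  have h1 : (2 * k + 1) / 2 = k := by omega
  have h2 : (2 * k) / 2 = k := by omega
  rw [psi, h1, h2]

lemma psi_odd (k : ℕ) : psi (2 * k + 1) = (X 1) ^ (k + 1) * (X 1 - C 1) ^ k := by
  have h1 : (2 * k + 1 + 1) / 2 = k + 1 := by omega
  have h2 : (2 * k + 1) / 2 = k := by omega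
  rw [psi, h1, h2]

lemma psi_succ (l : ℕ) :
    psi (l + 1) = psi l * (X 1 - C (if Even l then 0 else 1)) := by
  rcases Nat.even_or_odd l with ⟨k, hk⟩ | ⟨k, hk⟩
  · subst hk
    rw [if_pos (by exact ⟨k, by ring⟩)]
    rw [show k + k = 2 * k by ring, psi_even, psi_odd]
    rw [map_zero, sub_zero]
    ring
  · subst hk
    rw [if_neg (by simp [Nat.even_add_one, Nat.even_iff, Nat.odd_iff.mp ⟨k, rfl⟩])]
    rw [show 2 * k + 1 + 1 = 2 * (k + 1) by ring, psi_even, psi_odd]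
    ring

lemma psi_mul_totalDegree : ∀ (l : ℕ) (h : R2), h ≠ 0 →
    l + h.totalDegree ≤ (psi l * h).totalDegree := by
  intro l
  induction l with
  | zero => intro h hh; rw [psi_zero, one_mul]; omega
  | succ n ih =>
    intro h hh
    have hne : (X 1 - C (if Even n then 0 else 1)) * h ≠ 0 :=
      mul_ne_zero (X1_sub_C_ne_zero _) hh
    have h1 := ih _ hne
    have h2 := totalDegree_X1subC_mul (c := if Even n then 0 else 1) hh
    rw [psi_succ, mul_assoc]
    omega

lemma pderiv_iterate_pow_mul (c : ℂ) : ∀ (k : ℕ) (g : R2),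
    ∃ v : R2, (pderiv (1 : Fin 2))^[k] ((X 1 - C c) ^ k * g)
      = C (Nat.factorial k : ℂ) * g + (X 1 - C c) * v := by
  intro k
  induction k with
  | zero => intro g; exact ⟨0, by simp [Nat.factorial]⟩
  | succ k ih =>
    intro g
    have hc : ((k + 1 : ℕ) : R2) = C ((k : ℂ) + 1) := by
      push_cast
      simp
    have hder : pderiv (1 : Fin 2) ((X 1 - C c) ^ (k + 1) * g)
        = (X 1 - C c) ^ k * ((C ((k : ℂ) + 1)) * g + (X 1 - C c) * pderiv 1 g) := by
      rw [pderiv_mul, pderiv_pow]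
      have h1 : pderiv (1 : Fin 2) (X 1 - C c) = 1 := by
        rw [map_sub, pderiv_X_self, pderiv_C, sub_zero]
      rw [h1, Nat.add_sub_cancel, hc]
      ring
    rw [Function.iterate_succ_apply, hder]
    obtain ⟨v1, hv1⟩ := ih (C ((k : ℂ) + 1) * g + (X 1 - C c) * pderiv 1 g)
    refine ⟨C (Nat.factorial k : ℂ) * pderiv 1 g + v1, ?_⟩
    rw [hv1]
    have hfac : (Nat.factorial (k + 1) : ℂ) = ((k : ℂ) + 1) * (Nat.factorial k : ℂ) := by
      rw [Nat.factorial_succ]; push_cast; ring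
    rw [hfac, map_mul]
    ring

lemma X1_sub_C_dvd_sub_aeval (c : ℂ) (h : R2) :
    (X 1 - C c) ∣ (h - (MvPolynomial.aeval ![(X 0 : R2), C c]) h) := by
  induction h using MvPolynomial.induction_on with
  | C a => simp
  | add p q hp hq =>
    have he : p + q - (MvPolynomial.aeval ![(X 0 : R2), C c]) (p + q)
        = (p - (MvPolynomial.aeval ![(X 0 : R2), C c]) p)
          + (q - (MvPolynomial.aeval ![(X 0 : R2), C c]) q) := by
      rw [map_add]; ring
    rw [he]
    exact dvd_add hp hq
  | mul_X p i hp =>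
    fin_cases i <;> simp only [Fin.zero_eta, Fin.mk_one, Fin.isValue]
    · have he : p * X 0 - (MvPolynomial.aeval ![(X 0 : R2), C c]) (p * X 0)
          = (p - (MvPolynomial.aeval ![(X 0 : R2), C c]) p) * X 0 := by
        rw [map_mul, aeval_X]
        simp only [Matrix.cons_val_zero]
        ring
      rw [he]
      exact hp.mul_right _
    · have he : p * X 1 - (MvPolynomial.aeval ![(X 0 : R2), C c]) (p * X 1)
          = p * (X 1 - C c) + (p - (MvPolynomial.aeval ![(X 0 : R2), C c]) p) * C c := by
        rw [map_mul, aeval_X]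
        simp only [Matrix.cons_val_one, Matrix.head_cons, Matrix.cons_val_zero]
        ring
      rw [he]
      exact dvd_add (Dvd.intro_left _ rfl) (hp.mul_right _)

lemma X1_sub_C_dvd_of_Ac_eq_zero {c : ℂ} {h : R2} (h0 : Ac c h = 0) :
    (X 1 - C c) ∣ h := by
  have hcomp : (Polynomial.aeval (X 0 : R2)).comp (Ac c)
      = MvPolynomial.aeval ![(X 0 : R2), C c] := by
    apply MvPolynomial.algHom_ext
    intro i
    fin_cases i <;> simp [Ac]
  have hz : (MvPolynomial.aeval ![(X 0 : R2), C c]) h = 0 := by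
    rw [← hcomp]
    simp [AlgHom.comp_apply, h0]
  have hd := X1_sub_C_dvd_sub_aeval c h
  rw [hz, sub_zero] at hd
  exact hd

lemma derivative_Ac (c : ℂ) (g : R2) :
    Polynomial.derivative (Ac c g) = Ac c (pderiv (0 : Fin 2) g) := by
  induction g using MvPolynomial.induction_on with
  | C a => simp [Ac]
  | add p q hp hq => simp only [map_add, hp, hq]
  | mul_X p i hp =>
    fin_cases i <;> simp only [Fin.zero_eta, Fin.mk_one, Fin.isValue]
    · simp only [Ac, map_mul, aeval_X, Matrix.cons_val_zero, pderiv_mul, pderiv_X_self,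
        mul_one, map_add, Polynomial.derivative_mul, Polynomial.derivative_X] at *
      try rw [hp]
      try ring
    · simp only [Ac, map_mul, aeval_X, Matrix.cons_val_one, Matrix.head_cons, Matrix.cons_val_zero, pderiv_mul,
        pderiv_X_of_ne (show (1 : Fin 2) ≠ 0 by decide), mul_zero, add_zero, map_add,
        Polynomial.derivative_mul, Polynomial.derivative_C] at *
      try rw [hp]
      try ring

lemma derivative_iterate_Ac (c : ℂ) (i : ℕ) : ∀ g : R2,
    Polynomial.derivative^[i] (Ac c g) = Ac c ((pderiv (0 : Fin 2))^[i] g) := by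
  induction i with
  | zero => intro g; rfl
  | succ i ih =>
    intro g
    rw [Function.iterate_succ_apply, Function.iterate_succ_apply, derivative_Ac, ih]

lemma eval_Ac (c t : ℂ) (g : R2) :
    Polynomial.eval t (Ac c g) = MvPolynomial.aeval ![t, c] g := by
  induction g using MvPolynomial.induction_on with
  | C a => simp [Ac]
  | add p q hp hq => simp only [map_add, Polynomial.eval_add, hp, hq]
  | mul_X p i hp =>
    fin_cases i <;>
      simp only [Fin.zero_eta, Fin.mk_one, Fin.isValue, Ac, map_mul, aeval_X,
        Matrix.cons_val_zero, Matrix.cons_val_one,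
        Matrix.head_cons, Polynomial.eval_mul, Polynomial.eval_X, Polynomial.eval_C] at * <;>
      rw [hp]

lemma pow_dvd_Ac {r : ℕ} {t c : ℂ} {g : R2}
    (hv : ∀ i, i < r → MvPolynomial.aeval ![t, c] ((pderiv (0 : Fin 2))^[i] g) = 0) :
    (Polynomial.X - Polynomial.C t) ^ r ∣ Ac c g := by
  by_cases hq : Ac c g = 0
  · rw [hq]; exact dvd_zero _
  rcases Nat.eq_zero_or_pos r with hr | hr
  · rw [hr, pow_zero]; exact one_dvd _
  have hroot : ∀ i ≤ r - 1, (Polynomial.derivative^[i] (Ac c g)).IsRoot t := by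
    intro i hi
    rw [Polynomial.IsRoot, derivative_iterate_Ac, eval_Ac]
    exact hv i (by omega)
  have hlt := Polynomial.lt_rootMultiplicity_of_isRoot_iterate_derivative_of_mem_nonZeroDivisors
    hq hroot (mem_nonZeroDivisors_of_ne_zero (by
      exact_mod_cast (Nat.cast_ne_zero (R := ℂ)).mpr (Nat.factorial_ne_zero _)))
  exact dvd_trans (pow_dvd_pow _ (by omega)) (Polynomial.pow_rootMultiplicity_dvd _ t)

lemma natDegree_Ac_le (c : ℂ) (h : R2) : (Ac c h).natDegree ≤ h.totalDegree := by
  rw [Ac, aeval_def, eval₂_eq']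
  apply Polynomial.natDegree_sum_le_of_forall_le
  intro s hs
  have h1 : (∏ i, ![Polynomial.X, Polynomial.C c] i ^ s i)
      = Polynomial.X ^ s 0 * Polynomial.C c ^ s 1 := by
    rw [Fin.prod_univ_two]
    simp
  rw [h1]
  have e1 : (algebraMap ℂ (Polynomial ℂ) (coeff s h)).natDegree = 0 :=
    Polynomial.natDegree_C _
  have e2 : ((Polynomial.X : Polynomial ℂ) ^ s 0).natDegree = s 0 :=
    Polynomial.natDegree_X_pow _
  have e3 : ((Polynomial.C c : Polynomial ℂ) ^ s 1).natDegree = 0 := by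
    rw [← map_pow]; exact Polynomial.natDegree_C _
  have hle1 := Polynomial.natDegree_mul_le (p := algebraMap ℂ (Polynomial ℂ) (coeff s h))
    (q := (Polynomial.X : Polynomial ℂ) ^ s 0 * Polynomial.C c ^ s 1)
  have hle2 := Polynomial.natDegree_mul_le (p := (Polynomial.X : Polynomial ℂ) ^ s 0)
    (q := Polynomial.C c ^ s 1)
  have h6 : (s.sum fun _ e => e) = s 0 + s 1 := by
    rw [Finsupp.sum_fintype]
    · exact Fin.sum_univ_two _
    · intro _; rfl
  have h7 := le_totalDegree hs
  rw [h6] at h7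
  omega

end

end Poly

section Kspace

noncomputable section

instance degreeLT_findim (N : ℕ) : FiniteDimensional ℂ (Polynomial.degreeLT ℂ N) :=
  (Polynomial.degreeLTEquiv ℂ N).symm.finiteDimensional

lemma finrank_degreeLT (N : ℕ) : finrank ℂ (Polynomial.degreeLT ℂ N) = N := by
  rw [LinearEquiv.finrank_eq (Polynomial.degreeLTEquiv ℂ N)]
  simp

lemma finrank_degreeLT_inf_span_le (N : ℕ) (w : Polynomial ℂ) (hw : w ≠ 0) :
    finrank ℂ ↥(Polynomial.degreeLT ℂ N ⊓
      Submodule.restrictScalars ℂ (Ideal.span {w})) ≤ N - w.natDegree := by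
  by_cases hN : w.natDegree < N
  · have hincl : Polynomial.degreeLT ℂ N ⊓ Submodule.restrictScalars ℂ (Ideal.span {w})
        ≤ Submodule.map (LinearMap.mulLeft ℂ w) (Polynomial.degreeLT ℂ (N - w.natDegree)) := by
      intro q hq
      rw [Submodule.mem_inf] at hq
      obtain ⟨hq1, hq2⟩ := hq
      rw [Submodule.restrictScalars_mem, Ideal.mem_span_singleton] at hq2
      obtain ⟨u, hu⟩ := hq2
      by_cases hu0 : u = 0
      · refine ⟨0, Submodule.zero_mem _, ?_⟩
        simp [hu, hu0]
      · refine ⟨u, ?_, ?_⟩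
        · rw [SetLike.mem_coe, Polynomial.mem_degreeLT]
          have hq0 : q ≠ 0 := by
            rw [hu]; exact mul_ne_zero hw hu0
          have h1 : q.natDegree = w.natDegree + u.natDegree := by
            rw [hu]; exact Polynomial.natDegree_mul hw hu0
          have h2 : q.natDegree < N :=
            (Polynomial.natDegree_lt_iff_degree_lt hq0).mpr
              (Polynomial.mem_degreeLT.mp hq1)
          have h3 : u.natDegree < N - w.natDegree := by omega
          exact (Polynomial.natDegree_lt_iff_degree_lt hu0).mp h3
        · rw [LinearMap.mulLeft_apply]
          exact hu.symm
    calc finrank ℂ ↥(Polynomial.degreeLT ℂ N ⊓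
            Submodule.restrictScalars ℂ (Ideal.span {w}))
        ≤ finrank ℂ ↥(Submodule.map (LinearMap.mulLeft ℂ w)
            (Polynomial.degreeLT ℂ (N - w.natDegree))) := by
          haveI : FiniteDimensional ℂ ↥(Submodule.map (LinearMap.mulLeft ℂ w)
              (Polynomial.degreeLT ℂ (N - w.natDegree))) := Module.Finite.map _ _
          exact Submodule.finrank_mono hincl
      _ ≤ finrank ℂ (Polynomial.degreeLT ℂ (N - w.natDegree)) :=
          Submodule.finrank_map_le _ _
      _ = N - w.natDegree := finrank_degreeLT _
  · have hbot : Polynomial.degreeLT ℂ N ⊓ Submodule.restrictScalars ℂ (Ideal.span {w}) = ⊥ := by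
      rw [eq_bot_iff]
      intro q hq
      rw [Submodule.mem_inf] at hq
      obtain ⟨hq1, hq2⟩ := hq
      rw [Submodule.restrictScalars_mem, Ideal.mem_span_singleton] at hq2
      rw [Submodule.mem_bot]
      by_contra hq0
      have h1 := Polynomial.natDegree_le_of_dvd hq2 hq0
      have h2 : q.natDegree < N := (Polynomial.natDegree_lt_iff_degree_lt hq0).mpr
        (Polynomial.mem_degreeLT.mp hq1)
      omega
    rw [hbot]
    simp

end

end Kspace

section Main

noncomputable section

/-- The four points of the unit square grid. -/
def pts : Fin 4 → Fin 2 → ℂ := ![![0, 0], ![1, 0], ![0, 1], ![1, 1]]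

lemma degLE_eq (d : ℕ) : degLE (d : ℤ) = restrictTotalDegree (Fin 2) ℂ d := by
  unfold degLE restrictTotalDegree
  congr 1
  ext s
  simp only [Set.mem_setOf_eq]
  exact_mod_cast Iff.rfl

lemma mem_degLE {d : ℕ} {f : R2} : f ∈ degLE (d : ℤ) ↔ f.totalDegree ≤ d := by
  rw [degLE_eq, mem_restrictTotalDegree]

lemma mem_linSys_iff {d m : ℕ} {f : R2} :
    f ∈ linSys (d : ℤ) m pts ↔ f.totalDegree ≤ d ∧
      ∀ i : Fin 4, ∀ a b : ℕ, a + b < m →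
        MvPolynomial.aeval (pts i)
          ((pderiv (0 : Fin 2))^[a] ((pderiv (1 : Fin 2))^[b] f)) = 0 := by
  unfold linSys multAtLeast
  rw [Submodule.mem_inf, mem_degLE]
  apply and_congr Iff.rfl
  rw [Submodule.mem_iInf]
  apply forall_congr'
  intro i
  rw [Submodule.mem_iInf]
  apply forall_congr'
  intro a
  constructor
  · intro hb b hab
    have h1 := Submodule.mem_iInf _ |>.mp hb b
    have h2 := Submodule.mem_iInf _ |>.mp h1 hab
    rw [LinearMap.mem_ker] at h2
    simpa [Module.End.pow_apply] using h2
  · intro hb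
    rw [Submodule.mem_iInf]
    intro b
    rw [Submodule.mem_iInf]
    intro hab
    rw [LinearMap.mem_ker]
    simpa [Module.End.pow_apply] using hb b hab

/-- The filtration `G_l = linSys ⊓ (ψ_l)`. -/
def Gl (d m l : ℕ) : Submodule ℂ R2 :=
  linSys (d : ℤ) m pts ⊓ Submodule.restrictScalars ℂ (Ideal.span {psi l})

lemma mem_Gl {d m l : ℕ} {f : R2} :
    f ∈ Gl d m l ↔ f ∈ linSys (d : ℤ) m pts ∧ psi l ∣ f := by
  rw [Gl, Submodule.mem_inf, Submodule.restrictScalars_mem, Ideal.mem_span_singleton]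

lemma linSys_le_rtd (d m : ℕ) :
    linSys (d : ℤ) m pts ≤ restrictTotalDegree (Fin 2) ℂ d := by
  rw [← degLE_eq]
  exact inf_le_left

instance linSys_findim (d m : ℕ) : FiniteDimensional ℂ (linSys (d : ℤ) m pts) :=
  Submodule.finiteDimensional_of_le (linSys_le_rtd d m)

instance Gl_findim (d m l : ℕ) : FiniteDimensional ℂ (Gl d m l) :=
  Submodule.finiteDimensional_of_le (le_trans inf_le_left (linSys_le_rtd d m))

lemma Ac_X1 (c : ℂ) : Ac c (X 1) = Polynomial.C c := by simp [Ac]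

lemma Ac_C (c a : ℂ) : Ac c (C a) = Polynomial.C a := by simp [Ac]

lemma helper_even (k : ℕ) (h : R2) :
    Ac 0 ((pderiv (1 : Fin 2))^[k] (psi (2 * k) * h))
      = Polynomial.C ((Nat.factorial k : ℂ) * (-1) ^ k) * Ac 0 h := by
  have h1 : psi (2 * k) * h = (X 1 - C 0) ^ k * ((X 1 - C 1) ^ k * h) := by
    rw [psi_even, map_zero, sub_zero]; ring
  obtain ⟨v, hv⟩ := pderiv_iterate_pow_mul 0 k ((X 1 - C 1) ^ k * h)
  rw [h1, hv, map_add, map_mul, map_mul, map_mul, map_pow, map_sub, map_sub,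
    Ac_X1, Ac_C, Ac_C, Ac_C]
  have h2 : (Polynomial.C (0 : ℂ) - Polynomial.C 1) = Polynomial.C (-1) := by
    rw [← map_sub]; norm_num
  rw [h2, sub_self, zero_mul, add_zero, ← map_pow, ← mul_assoc, ← map_mul]

lemma helper_odd (k : ℕ) (h : R2) :
    Ac 1 ((pderiv (1 : Fin 2))^[k] (psi (2 * k + 1) * h))
      = Polynomial.C (Nat.factorial k : ℂ) * Ac 1 h := by
  have h1 : psi (2 * k + 1) * h = (X 1 - C 1) ^ k * ((X 1) ^ (k + 1) * h) := by
    rw [psi_odd]; ring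
  obtain ⟨v, hv⟩ := pderiv_iterate_pow_mul 1 k ((X 1) ^ (k + 1) * h)
  rw [h1, hv, map_add, map_mul, map_mul, map_mul, map_pow, map_sub, Ac_X1, Ac_C, Ac_C]
  simp

lemma w_dvd_Ac {d m k : ℕ} (hk : k < m) {f : R2} (hf : f ∈ linSys (d : ℤ) m pts)
    (c : ℂ) (i0 i1 : Fin 4) (h0 : pts i0 = ![0, c]) (h1 : pts i1 = ![1, c]) :
    (Polynomial.X - Polynomial.C 0) ^ (m - k) * (Polynomial.X - Polynomial.C 1) ^ (m - k)
      ∣ Ac c ((pderiv (1 : Fin 2))^[k] f) := by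
  have hcond := (mem_linSys_iff.mp hf).2
  have d1 : (Polynomial.X - Polynomial.C (0 : ℂ)) ^ (m - k)
      ∣ Ac c ((pderiv (1 : Fin 2))^[k] f) := by
    apply pow_dvd_Ac
    intro i hi
    have := hcond i0 i k (by omega)
    rwa [h0] at this
  have d2 : (Polynomial.X - Polynomial.C (1 : ℂ)) ^ (m - k)
      ∣ Ac c ((pderiv (1 : Fin 2))^[k] f) := by
    apply pow_dvd_Ac
    intro i hi
    have := hcond i1 i k (by omega)
    rwa [h1] at this
  have hcop : IsCoprime ((Polynomial.X - Polynomial.C (0 : ℂ)) ^ (m - k))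
      ((Polynomial.X - Polynomial.C (1 : ℂ)) ^ (m - k)) := by
    apply IsCoprime.pow
    apply Polynomial.isCoprime_X_sub_C_of_isUnit_sub
    norm_num
  exact hcop.mul_dvd d1 d2

lemma step_even {d m k : ℕ} (hk : k < m) (hld : 2 * k ≤ d) :
    finrank ℂ (Gl d m (2 * k)) ≤ finrank ℂ (Gl d m (2 * k + 1)) + (d + 1 - 2 * m) := by
  classical
  set φ : R2 →ₗ[ℂ] Polynomial ℂ :=
    (Ac 0).toLinearMap ∘ₗ ((pderiv (1 : Fin 2)).toLinearMap ^ k) with hφ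
  have hφapp : ∀ f : R2, φ f = Ac 0 ((pderiv (1 : Fin 2))^[k] f) := by
    intro f; simp [hφ, Module.End.pow_apply]
  set w : Polynomial ℂ := (Polynomial.X - Polynomial.C 0) ^ (m - k)
    * (Polynomial.X - Polynomial.C 1) ^ (m - k) with hw
  have hw0 : w ≠ 0 := mul_ne_zero (pow_ne_zero _ (Polynomial.X_sub_C_ne_zero 0))
    (pow_ne_zero _ (Polynomial.X_sub_C_ne_zero 1))
  have hwdeg : w.natDegree = (m - k) + (m - k) := by
    rw [hw, Polynomial.natDegree_mul (pow_ne_zero _ (Polynomial.X_sub_C_ne_zero 0))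
      (pow_ne_zero _ (Polynomial.X_sub_C_ne_zero 1)), Polynomial.natDegree_pow,
      Polynomial.natDegree_pow, Polynomial.natDegree_X_sub_C,
      Polynomial.natDegree_X_sub_C, mul_one]
  set Z : Submodule ℂ (Polynomial ℂ) := Polynomial.degreeLT ℂ (d - 2 * k + 1)
    ⊓ Submodule.restrictScalars ℂ (Ideal.span {w}) with hZ
  haveI : FiniteDimensional ℂ Z := Submodule.finiteDimensional_of_le inf_le_left
  have hCne : (Polynomial.C ((Nat.factorial k : ℂ) * (-1) ^ k)) ≠ 0 := by
    rw [Ne, Polynomial.C_eq_zero]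
    exact mul_ne_zero (Nat.cast_ne_zero.mpr (Nat.factorial_ne_zero k))
      (pow_ne_zero _ (neg_ne_zero.mpr one_ne_zero))
  have h1 : Gl d m (2 * k) ⊓ LinearMap.ker φ ≤ Gl d m (2 * k + 1) := by
    intro f hf
    rw [Submodule.mem_inf] at hf
    obtain ⟨hfG, hfk⟩ := hf
    rw [mem_Gl] at hfG
    obtain ⟨hfS, h, rfl⟩ := hfG
    rw [LinearMap.mem_ker, hφapp, helper_even] at hfk
    have hAc0 : Ac 0 h = 0 := by
      rcases mul_eq_zero.mp hfk with h' | h'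
      · exact absurd h' hCne
      · exact h'
    have hdvd2 := X1_sub_C_dvd_of_Ac_eq_zero hAc0
    rw [map_zero, sub_zero] at hdvd2
    obtain ⟨h', rfl⟩ := hdvd2
    rw [mem_Gl]
    refine ⟨hfS, ⟨h', ?_⟩⟩
    rw [psi_odd, psi_even]
    ring
  have h2 : ∀ f ∈ Gl d m (2 * k), φ f ∈ Z := by
    intro f hf
    rw [mem_Gl] at hf
    obtain ⟨hfS, h, rfl⟩ := hf
    rw [Submodule.mem_inf]
    constructor
    · rw [Polynomial.mem_degreeLT, hφapp, helper_even]
      by_cases hz : Polynomial.C ((Nat.factorial k : ℂ) * (-1) ^ k) * Ac 0 h = 0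
      · rw [hz, Polynomial.degree_zero]
        exact WithBot.bot_lt_coe _
      · have hh : h ≠ 0 := by
          intro h0
          apply hz
          rw [h0]
          simp
        have hd1 : (Ac 0 h).natDegree ≤ d - 2 * k := by
          refine le_trans (natDegree_Ac_le 0 h) ?_
          have h2' := psi_mul_totalDegree (2 * k) h hh
          have h3 : (psi (2 * k) * h).totalDegree ≤ d := (mem_linSys_iff.mp hfS).1
          omega
        have hd2 : (Polynomial.C ((Nat.factorial k : ℂ) * (-1) ^ k) * Ac 0 h).natDegree
            ≤ d - 2 * k := le_trans (Polynomial.natDegree_C_mul_le _ _) hd1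
        exact (Polynomial.natDegree_lt_iff_degree_lt hz).mp (by omega)
    · rw [Submodule.restrictScalars_mem, Ideal.mem_span_singleton, hφapp, hw]
      exact w_dvd_Ac hk hfS 0 0 1 rfl rfl
  refine le_trans (finrank_le_add (Gl d m (2 * k)) (Gl d m (2 * k + 1)) Z φ h1 h2) ?_
  have hZfr : finrank ℂ Z ≤ d + 1 - 2 * m := by
    refine le_trans (finrank_degreeLT_inf_span_le _ w hw0) ?_
    rw [hwdeg]
    omega
  omega

lemma step_odd {d m k : ℕ} (hk : k < m) (hld : 2 * k + 1 ≤ d) :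
    finrank ℂ (Gl d m (2 * k + 1)) ≤ finrank ℂ (Gl d m (2 * k + 2)) + (d - 2 * m) := by
  classical
  set φ : R2 →ₗ[ℂ] Polynomial ℂ :=
    (Ac 1).toLinearMap ∘ₗ ((pderiv (1 : Fin 2)).toLinearMap ^ k) with hφ
  have hφapp : ∀ f : R2, φ f = Ac 1 ((pderiv (1 : Fin 2))^[k] f) := by
    intro f; simp [hφ, Module.End.pow_apply]
  set w : Polynomial ℂ := (Polynomial.X - Polynomial.C 0) ^ (m - k)
    * (Polynomial.X - Polynomial.C 1) ^ (m - k) with hw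
  have hw0 : w ≠ 0 := mul_ne_zero (pow_ne_zero _ (Polynomial.X_sub_C_ne_zero 0))
    (pow_ne_zero _ (Polynomial.X_sub_C_ne_zero 1))
  have hwdeg : w.natDegree = (m - k) + (m - k) := by
    rw [hw, Polynomial.natDegree_mul (pow_ne_zero _ (Polynomial.X_sub_C_ne_zero 0))
      (pow_ne_zero _ (Polynomial.X_sub_C_ne_zero 1)), Polynomial.natDegree_pow,
      Polynomial.natDegree_pow, Polynomial.natDegree_X_sub_C,
      Polynomial.natDegree_X_sub_C, mul_one]
  set Z : Submodule ℂ (Polynomial ℂ) := Polynomial.degreeLT ℂ (d - (2 * k + 1) + 1)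
    ⊓ Submodule.restrictScalars ℂ (Ideal.span {w}) with hZ
  haveI : FiniteDimensional ℂ Z := Submodule.finiteDimensional_of_le inf_le_left
  have hCne : (Polynomial.C (Nat.factorial k : ℂ)) ≠ 0 := by
    rw [Ne, Polynomial.C_eq_zero]
    exact Nat.cast_ne_zero.mpr (Nat.factorial_ne_zero k)
  have h1 : Gl d m (2 * k + 1) ⊓ LinearMap.ker φ ≤ Gl d m (2 * k + 2) := by
    intro f hf
    rw [Submodule.mem_inf] at hf
    obtain ⟨hfG, hfk⟩ := hf
    rw [mem_Gl] at hfG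
    obtain ⟨hfS, h, rfl⟩ := hfG
    rw [LinearMap.mem_ker, hφapp, helper_odd] at hfk
    have hAc1 : Ac 1 h = 0 := by
      rcases mul_eq_zero.mp hfk with h' | h'
      · exact absurd h' hCne
      · exact h'
    have hdvd2 := X1_sub_C_dvd_of_Ac_eq_zero hAc1
    obtain ⟨h', rfl⟩ := hdvd2
    rw [mem_Gl]
    refine ⟨hfS, ⟨h', ?_⟩⟩
    rw [show 2 * k + 2 = 2 * (k + 1) by ring, psi_even, psi_odd]
    ring
  have h2 : ∀ f ∈ Gl d m (2 * k + 1), φ f ∈ Z := by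
    intro f hf
    rw [mem_Gl] at hf
    obtain ⟨hfS, h, rfl⟩ := hf
    rw [Submodule.mem_inf]
    constructor
    · rw [Polynomial.mem_degreeLT, hφapp, helper_odd]
      by_cases hz : Polynomial.C (Nat.factorial k : ℂ) * Ac 1 h = 0
      · rw [hz, Polynomial.degree_zero]
        exact WithBot.bot_lt_coe _
      · have hh : h ≠ 0 := by
          intro h0
          apply hz
          rw [h0]
          simp
        have hd1 : (Ac 1 h).natDegree ≤ d - (2 * k + 1) := by
          refine le_trans (natDegree_Ac_le 1 h) ?_
          have h2' := psi_mul_totalDegree (2 * k + 1) h hh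
          have h3 : (psi (2 * k + 1) * h).totalDegree ≤ d := (mem_linSys_iff.mp hfS).1
          omega
        have hd2 : (Polynomial.C (Nat.factorial k : ℂ) * Ac 1 h).natDegree
            ≤ d - (2 * k + 1) := le_trans (Polynomial.natDegree_C_mul_le _ _) hd1
        exact (Polynomial.natDegree_lt_iff_degree_lt hz).mp (by omega)
    · rw [Submodule.restrictScalars_mem, Ideal.mem_span_singleton, hφapp, hw]
      exact w_dvd_Ac hk hfS 1 2 3 rfl rfl
  refine le_trans (finrank_le_add (Gl d m (2 * k + 1)) (Gl d m (2 * k + 2)) Z φ h1 h2) ?_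
  have hZfr : finrank ℂ Z ≤ d - 2 * m := by
    refine le_trans (finrank_degreeLT_inf_span_le _ w hw0) ?_
    rw [hwdeg]
    omega
  omega

lemma Gl_zero_eq (d m : ℕ) : Gl d m 0 = linSys (d : ℤ) m pts := by
  ext f
  rw [mem_Gl, psi_zero]
  simp

lemma Gl_dsucc (d m : ℕ) : Gl d m (d + 1) = ⊥ := by
  rw [eq_bot_iff]
  intro f hf
  rw [mem_Gl] at hf
  obtain ⟨hfS, h, rfl⟩ := hf
  rw [Submodule.mem_bot]
  by_cases hh : h = 0
  · rw [hh, mul_zero]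
  · exfalso
    have h1 := psi_mul_totalDegree (d + 1) h hh
    have h2 : (psi (d + 1) * h).totalDegree ≤ d := (mem_linSys_iff.mp hfS).1
    omega

lemma tail_bound (d m : ℕ) :
    finrank ℂ (Gl d m (2 * m))
      ≤ finrank ℂ (restrictTotalDegree (Fin 2) ℂ (d - 2 * m)) := by
  have hincl : Gl d m (2 * m) ≤ Submodule.map (LinearMap.mulLeft ℂ (psi (2 * m)))
      (restrictTotalDegree (Fin 2) ℂ (d - 2 * m)) := by
    intro f hf
    rw [mem_Gl] at hf
    obtain ⟨hfS, h, rfl⟩ := hf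
    by_cases hh : h = 0
    · refine ⟨0, Submodule.zero_mem _, ?_⟩
      simp [hh]
    · refine ⟨h, ?_, ?_⟩
      · rw [SetLike.mem_coe, mem_restrictTotalDegree]
        have h1 := psi_mul_totalDegree (2 * m) h hh
        have h2 : (psi (2 * m) * h).totalDegree ≤ d := (mem_linSys_iff.mp hfS).1
        omega
      · rw [LinearMap.mulLeft_apply]
  calc finrank ℂ (Gl d m (2 * m))
      ≤ finrank ℂ ↥(Submodule.map (LinearMap.mulLeft ℂ (psi (2 * m)))
          (restrictTotalDegree (Fin 2) ℂ (d - 2 * m))) := by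
        haveI : FiniteDimensional ℂ ↥(Submodule.map (LinearMap.mulLeft ℂ (psi (2 * m)))
            (restrictTotalDegree (Fin 2) ℂ (d - 2 * m))) := Module.Finite.map _ _
        exact Submodule.finrank_mono hincl
    _ ≤ finrank ℂ (restrictTotalDegree (Fin 2) ℂ (d - 2 * m)) :=
        Submodule.finrank_map_le _ _

/-- The per-level upper bound. -/
def kap (d m l : ℕ) : ℕ := if Even l then d + 1 - 2 * m else d - 2 * m

lemma chain (d m : ℕ) : ∀ j, j ≤ 2 * m → j ≤ d + 1 →
    finrank ℂ (Gl d m 0) ≤ (∑ l ∈ Finset.range j, kap d m l) + finrank ℂ (Gl d m j) := by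
  intro j
  induction j with
  | zero => simp
  | succ j ih =>
    intro hj1 hj2
    have hstep : finrank ℂ (Gl d m j) ≤ finrank ℂ (Gl d m (j + 1)) + kap d m j := by
      rcases Nat.even_or_odd j with ⟨k, hk⟩ | ⟨k, hk⟩
      · have hj : j = 2 * k := by omega
        subst hj
        have h1 := step_even (d := d) (m := m) (k := k) (by omega) (by omega)
        rw [kap, if_pos (by exact ⟨k, by ring⟩)]
        omega
      · have hj : j = 2 * k + 1 := by omega
        subst hj
        have h1 := step_odd (d := d) (m := m) (k := k) (by omega) (by omega)
        rw [kap, if_neg (by simp [Nat.even_add_one, Nat.even_iff, Nat.odd_iff.mp ⟨k, rfl⟩]),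
          show 2 * k + 1 + 1 = 2 * k + 2 by ring]
        omega
    have hih := ih (by omega) (by omega)
    rw [Finset.sum_range_succ]
    omega

lemma sum_alt (A B : ℕ) : ∀ n : ℕ,
    (∑ l ∈ Finset.range (2 * n), if Even l then A else B) = n * A + n * B := by
  intro n
  induction n with
  | zero => simp
  | succ n ih =>
    have h1 : 2 * (n + 1) = (2 * n + 1) + 1 := by ring
    rw [h1, Finset.sum_range_succ, Finset.sum_range_succ, ih]
    have he : Even (2 * n) := ⟨n, by ring⟩
    have ho : ¬ Even (2 * n + 1) := by simp [Nat.even_add_one, he]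
    rw [if_pos he, if_neg ho]
    ring

/-- The linear functionals cutting out the multiplicity conditions. -/
def Phi (x : Fin 4 × ℕ × ℕ) : R2 →ₗ[ℂ] ℂ :=
  (MvPolynomial.aeval (pts x.1)).toLinearMap ∘ₗ
    (((MvPolynomial.pderiv (0 : Fin 2)).toLinearMap ^ x.2.1) ∘ₗ
     ((MvPolynomial.pderiv (1 : Fin 2)).toLinearMap ^ x.2.2))

lemma linSys_eq_inf (d m : ℕ) :
    linSys (d : ℤ) m pts = degLE (d : ℤ) ⊓
      ⨅ x ∈ (Finset.univ ×ˢ triangle m : Finset (Fin 4 × ℕ × ℕ)), LinearMap.ker (Phi x) := by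
  ext f
  rw [Submodule.mem_inf]
  rw [mem_linSys_iff]
  rw [mem_degLE]
  apply and_congr Iff.rfl
  constructor
  · intro hcond
    rw [Submodule.mem_iInf]
    intro x
    rw [Submodule.mem_iInf]
    intro hx
    rw [Finset.mem_product, mem_triangle] at hx
    rw [LinearMap.mem_ker, Phi]
    simpa [Module.End.pow_apply] using hcond x.1 x.2.1 x.2.2 hx.2
  · intro hmem i a b hab
    have h1 := Submodule.mem_iInf _ |>.mp hmem (i, (a, b))
    have h2 := Submodule.mem_iInf _ |>.mp h1 (by
      rw [Finset.mem_product, mem_triangle]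
      exact ⟨Finset.mem_univ _, hab⟩)
    rw [LinearMap.mem_ker, Phi] at h2
    simpa [Module.End.pow_apply] using h2

lemma lower_bound (d m : ℕ) :
    finrank ℂ (restrictTotalDegree (Fin 2) ℂ d)
      ≤ finrank ℂ (linSys (d : ℤ) m pts) + 4 * (triangle m).card := by
  classical
  have h1 := finrank_le_inf_iInf_ker (restrictTotalDegree (Fin 2) ℂ d) Phi
    (Finset.univ ×ˢ triangle m)
  have h2 : restrictTotalDegree (Fin 2) ℂ d ⊓
      (⨅ x ∈ (Finset.univ ×ˢ triangle m : Finset (Fin 4 × ℕ × ℕ)), LinearMap.ker (Phi x))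
      = linSys (d : ℤ) m pts := by
    rw [linSys_eq_inf, degLE_eq]
  rw [h2] at h1
  have h3 : (Finset.univ ×ˢ triangle m : Finset (Fin 4 × ℕ × ℕ)).card
      = 4 * (triangle m).card := by
    rw [Finset.card_product]
    simp
  omega

end

end Main


/-- The homogeneous linear systems `L_d(m^4)` through four general points are
non-special for all `d` and `m`. -/
theorem nonSpecial_four (d m : ℕ) : NonSpecial d m 4 := by

  refine ⟨pts, ?_⟩
  set F : ℕ := finrank ℂ (linSys (d : ℤ) m pts) with hF
  set Td : ℕ := finrank ℂ (restrictTotalDegree (Fin 2) ℂ d) with hTd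
  set Mc : ℕ := (triangle m).card with hMc
  have hTd2 : 2 * Td = (d + 1) * (d + 2) := two_mul_finrank_rtd d
  have hMc2 : 2 * Mc = m * (m + 1) := card_triangle m
  have hlow : Td ≤ F + 4 * Mc := lower_bound d m
  have hTd2' : 2 * (Td : ℤ) = ((d : ℤ) + 1) * ((d : ℤ) + 2) := by exact_mod_cast hTd2
  have hMc2' : 2 * (Mc : ℤ) = (m : ℤ) * ((m : ℤ) + 1) := by exact_mod_cast hMc2
  have hlowZ : (Td : ℤ) ≤ (F : ℤ) + 4 * (Mc : ℤ) := by exact_mod_cast hlow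
  have hED : expectedDim (d : ℤ) m 4 = max 0 ((Td : ℤ) - 4 * (Mc : ℤ)) := by
    rw [expectedDim]
    congr 1
    have e2 : ((4 : ℕ) : ℤ) * ((m : ℤ) * ((m : ℤ) + 1)) = 2 * (4 * (Mc : ℤ)) := by
      push_cast
      linarith
    rw [hTd2'.symm, e2, Int.mul_ediv_cancel_left _ two_ne_zero,
      Int.mul_ediv_cancel_left _ two_ne_zero]
  rw [hED]
  by_cases hcase : 2 * m ≤ d
  · -- many conditions: j runs through 0, ..., 2m-1, then the tail
    set Te : ℕ := finrank ℂ (restrictTotalDegree (Fin 2) ℂ (d - 2 * m)) with hTe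
    have hTe2 : 2 * Te = (d - 2 * m + 1) * (d - 2 * m + 2) := two_mul_finrank_rtd _
    have hup : F ≤ m * (d + 1 - 2 * m) + m * (d - 2 * m) + Te := by
      have hchain := chain d m (2 * m) le_rfl (by omega)
      have hG0 : finrank ℂ (Gl d m 0) = F := by
        rw [hF, Gl_zero_eq]
      have hsum : (∑ l ∈ Finset.range (2 * m), kap d m l)
          = m * (d + 1 - 2 * m) + m * (d - 2 * m) := by
        rw [← sum_alt (d + 1 - 2 * m) (d - 2 * m) m]
        apply Finset.sum_congr rfl
        intro l _
        rfl
      have htail := tail_bound d m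
      rw [← hTe] at htail
      omega
    have hupZ : (F : ℤ) ≤ (m : ℤ) * ((d : ℤ) + 1 - 2 * m)
        + (m : ℤ) * ((d : ℤ) - 2 * m) + (Te : ℤ) := by
      have h1' : 2 * m ≤ d + 1 := by omega
      zify [h1', hcase] at hup
      exact hup
    have hTe2' : 2 * (Te : ℤ) = ((d : ℤ) - 2 * m + 1) * ((d : ℤ) - 2 * m + 2) := by
      zify [hcase] at hTe2
      exact hTe2
    have hkey2 : 2 * ((m : ℤ) * ((d : ℤ) + 1 - 2 * m)
        + (m : ℤ) * ((d : ℤ) - 2 * m) + (Te : ℤ)) = 2 * ((Td : ℤ) - 4 * (Mc : ℤ)) := by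
      linear_combination hTe2' - hTd2' + 4 * hMc2'
    have hFeq : (F : ℤ) = (Td : ℤ) - 4 * (Mc : ℤ) := by linarith
    have hnn : (0 : ℤ) ≤ (Td : ℤ) - 4 * (Mc : ℤ) := by
      rw [← hFeq]
      exact Int.natCast_nonneg F
    rw [max_eq_right hnn]
    exact hFeq
  · -- the system is empty
    have hup : F ≤ 0 := by
      have hchain := chain d m (d + 1) (by omega) le_rfl
      have hG0 : finrank ℂ (Gl d m 0) = F := by
        rw [hF, Gl_zero_eq]
      have hGd : finrank ℂ (Gl d m (d + 1)) = 0 := by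
        rw [Gl_dsucc]
        exact finrank_bot ℂ R2
      have hz : ∀ l ∈ Finset.range (d + 1), kap d m l = 0 := by
        intro l _
        rw [kap]
        split <;> omega
      rw [Finset.sum_congr rfl hz] at hchain
      simp only [Finset.sum_const_zero, zero_add] at hchain
      omega
    have hF0 : F = 0 := by omega
    have h1 : (d + 1) * (d + 2) ≤ (2 * m) * (2 * m + 1) :=
      Nat.mul_le_mul (by omega) (by omega)
    have h2 : (2 * m) * (2 * m + 1) ≤ 4 * (m * (m + 1)) := by nlinarith
    have hneg : (Td : ℤ) - 4 * (Mc : ℤ) ≤ 0 := by omega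
    rw [hF0, max_eq_left hneg]
    simp
end

section
/- (Claim 2) Let d ≥ 0, k ≥ 0, m ≥ 0 and n₁ ≥ 1, n₂ ≥ 1 be integers. Set T = max(0, max(0, v(d, k, n₁)) − max(0, v(d, k+1, n₁)) + n₁·(max(0, v(k, m, n₂)) − max(0, v(k−1, m, n₂))) − n₁(k+1)). Then: (1) if v(d, k+1, n₁) ≥ 0 and v(k−1, m, n₂) ≥ 0, then T = n₁(k+1); (2) if v(d, k+1, n₁) ≥ 0, v(k, m, n₂) ≥ 0 and v(k−1, m, n₂) ≤ 0, then T = n₁·(k(k+3)/2 + 1 − n₂·m(m+1)/2); (3) if v(d, k, n₁) ≥ 0, v(d, k+1, n₁) ≤ 0 and v(k−1, m, n₂) ≥ 0, then T = d(d+3)/2 + 1 − n₁·k(k+1)/2; (4) if v(d, k+1, n₁) ≤ 0, v(k−1, m, n₂) ≤ 0 and d(d+3)/2 + 1 − n₁n₂·m(m+1)/2 ≥ 0, then T = d(d+3)/2 + 1 − n₁n₂·m(m+1)/2; (5) in all remaining cases T = 0. -/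
/-!
With `b = v(d, k+1, n₁)`, `e = v(k-1, m, n₂)` and `s = k+1`, the other virtual dimensions are
affine in these: `v(d, k, n₁) = b + n₁ s`, `v(k, m, n₂) = e + s`, and
`d(d+3)/2 + 1 − n₁n₂·m(m+1)/2 = v(d, m, n₁n₂) = b + n₁ (e + s)`, the last because a point of
multiplicity `k+1` imposes exactly `v(k, 0, 1) = (k+1)(k+2)/2` conditions. Each `max 0` in `T` is
then resolved by the sign of one of these affine expressions, and the five cases are the resulting
sign patterns.
-/

/-- The virtual dimension `v(δ, μ, ν) = δ(δ+3)/2 + 1 − ν·μ(μ+1)/2` (as a rational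
number) of the vector space associated with the homogeneous linear system
`L_δ(μ^ν)`. -/
def vdim (δ : ℤ) (μ ν : ℕ) : ℚ :=
  (δ : ℚ) * ((δ : ℚ) + 3) / 2 + 1 - (ν : ℚ) * ((μ : ℚ) * ((μ : ℚ) + 1)) / 2

theorem vdim_natCast (a μ ν : ℕ) :
    vdim a μ ν = (a : ℚ) * ((a : ℚ) + 3) / 2 + 1
      - (ν : ℚ) * ((μ : ℚ) * ((μ : ℚ) + 1)) / 2 := by
  rw [vdim, Int.cast_natCast]

theorem vdim_succ_add (δ : ℤ) (μ ν : ℕ) :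
    vdim δ (μ + 1) ν + ν * (μ + 1) = vdim δ μ ν := by
  simp only [vdim]; push_cast; ring

theorem vdim_sub_one_add (δ : ℤ) (μ ν : ℕ) :
    vdim (δ - 1) μ ν + (δ + 1) = vdim δ μ ν := by
  simp only [vdim]; push_cast; ring

theorem vdim_mul (δ : ℤ) (κ μ n ν : ℕ) :
    vdim δ μ (n * ν) = vdim δ (κ + 1) n + n * vdim κ μ ν := by
  simp only [vdim]; push_cast; ring

section
variable {K : Type*} [CommRing K] [LinearOrder K] [IsStrictOrderedRing K] {n s b e : K}

/-- The quantity `T` of the claim as a function of `b`, `e`, `n = n₁` and `s = k+1`. -/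
def intersectionDim (n s b e : K) : K :=
  max 0 (max 0 (b + n * s) - max 0 b + n * (max 0 (e + s) - max 0 e) - n * s)

theorem intersectionDim_of_nonneg_of_nonneg (hn : 0 ≤ n) (hs : 0 ≤ s) (hb : 0 ≤ b)
    (he : 0 ≤ e) :
    intersectionDim n s b e = n * s := by
  have hns : 0 ≤ n * s := mul_nonneg hn hs
  rw [intersectionDim, max_eq_right hb, max_eq_right (by linarith : 0 ≤ b + n * s),
    max_eq_right he, max_eq_right (by linarith : 0 ≤ e + s), max_eq_right (by linarith)]
  ring

theorem intersectionDim_of_nonneg_of_nonpos (hn : 0 ≤ n) (hs : 0 ≤ s) (hb : 0 ≤ b)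
    (hes : 0 ≤ e + s) (he : e ≤ 0) :
    intersectionDim n s b e = n * (e + s) := by
  have hns : 0 ≤ n * s := mul_nonneg hn hs
  rw [intersectionDim, max_eq_right hb, max_eq_right (by linarith : 0 ≤ b + n * s),
    max_eq_left he, max_eq_right hes, max_eq_right (by linarith [mul_nonneg hn hes])]
  ring

theorem intersectionDim_of_nonpos_of_nonneg (hs : 0 ≤ s) (hbs : 0 ≤ b + n * s) (hb : b ≤ 0)
    (he : 0 ≤ e) :
    intersectionDim n s b e = b + n * s := by
  rw [intersectionDim, max_eq_left hb, max_eq_right hbs,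
    max_eq_right he, max_eq_right (by linarith : 0 ≤ e + s), max_eq_right (by linarith)]
  ring

theorem intersectionDim_of_nonpos_of_nonpos (hn : 0 ≤ n) (hb : b ≤ 0) (he : e ≤ 0)
    (hbes : 0 ≤ b + n * (e + s)) :
    intersectionDim n s b e = b + n * (e + s) := by
  have hne : n * e ≤ 0 := mul_nonpos_of_nonneg_of_nonpos hn he
  rw [intersectionDim, max_eq_left hb, max_eq_right (by linarith : 0 ≤ b + n * s),
    max_eq_left he, mul_sub, mul_max_of_nonneg _ _ hn, mul_zero,
    max_eq_right (by linarith : 0 ≤ n * (e + s)), max_eq_right (by linarith)]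
  ring

theorem intersectionDim_eq_zero (hn : 0 ≤ n) (hs : 0 ≤ s) (h₁ : ¬(0 ≤ b ∧ 0 ≤ e))
    (h₂ : ¬(0 ≤ b ∧ 0 ≤ e + s ∧ e ≤ 0))
    (h₃ : ¬(0 ≤ b + n * s ∧ b ≤ 0 ∧ 0 ≤ e))
    (h₄ : ¬(b ≤ 0 ∧ e ≤ 0 ∧ 0 ≤ b + n * (e + s))) :
    intersectionDim n s b e = 0 := by
  have hns : 0 ≤ n * s := mul_nonneg hn hs
  rw [intersectionDim, max_eq_left_iff]
  rcases le_total 0 b with hb | hb <;> rcases le_total 0 e with he | he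
  · exact absurd ⟨hb, he⟩ h₁
  · have hes : e + s ≤ 0 := by
      by_contra! h; exact h₂ ⟨hb, h.le, he⟩
    rw [max_eq_right hb, max_eq_right (by linarith : 0 ≤ b + n * s), max_eq_left he,
      max_eq_left hes]
    linarith
  · have hbs : b + n * s ≤ 0 := by
      by_contra! h; exact h₃ ⟨h.le, hb, he⟩
    rw [max_eq_left hb, max_eq_left hbs, max_eq_right he,
      max_eq_right (by linarith : 0 ≤ e + s)]
    linarith
  · have hbes : b + n * (e + s) < 0 := by
      by_contra! h; exact h₄ ⟨hb, he, h⟩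
    have hne : n * e ≤ 0 := mul_nonpos_of_nonneg_of_nonpos hn he
    rw [max_eq_left hb, max_eq_left he]
    rcases le_total 0 (b + n * s) with hbs | hbs <;> rcases le_total 0 (e + s) with hes | hes
      <;> simp only [max_eq_left, max_eq_right, hbs, hes] <;> nlinarith

end

theorem claim2_general (d k m n₁ n₂ : ℕ) (T : ℚ)
    (hT : T = max 0 (max 0 (vdim d k n₁) - max 0 (vdim d (k + 1) n₁)
      + (n₁ : ℚ) * (max 0 (vdim k m n₂) - max 0 (vdim ((k : ℤ) - 1) m n₂))
      - (n₁ : ℚ) * ((k : ℚ) + 1))) :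
    (0 ≤ vdim d (k + 1) n₁ → 0 ≤ vdim ((k : ℤ) - 1) m n₂ →
      T = (n₁ : ℚ) * ((k : ℚ) + 1)) ∧
    (0 ≤ vdim d (k + 1) n₁ → 0 ≤ vdim k m n₂ → vdim ((k : ℤ) - 1) m n₂ ≤ 0 →
      T = (n₁ : ℚ) * ((k : ℚ) * ((k : ℚ) + 3) / 2 + 1
        - (n₂ : ℚ) * ((m : ℚ) * ((m : ℚ) + 1)) / 2)) ∧
    (0 ≤ vdim d k n₁ → vdim d (k + 1) n₁ ≤ 0 → 0 ≤ vdim ((k : ℤ) - 1) m n₂ →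
      T = (d : ℚ) * ((d : ℚ) + 3) / 2 + 1 - (n₁ : ℚ) * ((k : ℚ) * ((k : ℚ) + 1)) / 2) ∧
    (vdim d (k + 1) n₁ ≤ 0 → vdim ((k : ℤ) - 1) m n₂ ≤ 0 →
      0 ≤ (d : ℚ) * ((d : ℚ) + 3) / 2 + 1
        - (n₁ : ℚ) * (n₂ : ℚ) * ((m : ℚ) * ((m : ℚ) + 1)) / 2 →
      T = (d : ℚ) * ((d : ℚ) + 3) / 2 + 1
        - (n₁ : ℚ) * (n₂ : ℚ) * ((m : ℚ) * ((m : ℚ) + 1)) / 2) ∧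
    (¬(0 ≤ vdim d (k + 1) n₁ ∧ 0 ≤ vdim ((k : ℤ) - 1) m n₂) →
     ¬(0 ≤ vdim d (k + 1) n₁ ∧ 0 ≤ vdim k m n₂ ∧ vdim ((k : ℤ) - 1) m n₂ ≤ 0) →
     ¬(0 ≤ vdim d k n₁ ∧ vdim d (k + 1) n₁ ≤ 0 ∧ 0 ≤ vdim ((k : ℤ) - 1) m n₂) →
     ¬(vdim d (k + 1) n₁ ≤ 0 ∧ vdim ((k : ℤ) - 1) m n₂ ≤ 0 ∧
        0 ≤ (d : ℚ) * ((d : ℚ) + 3) / 2 + 1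
          - (n₁ : ℚ) * (n₂ : ℚ) * ((m : ℚ) * ((m : ℚ) + 1)) / 2) →
      T = 0) := by
  have hn : (0 : ℚ) ≤ n₁ := n₁.cast_nonneg
  have hs : (0 : ℚ) ≤ k + 1 := by positivity
  have hC : vdim ((k : ℤ) - 1) m n₂ + ((k : ℚ) + 1) = vdim k m n₂ := by
    rw [← vdim_sub_one_add (k : ℤ), Int.cast_natCast]
  have hE : (d : ℚ) * ((d : ℚ) + 3) / 2 + 1
      - (n₁ : ℚ) * (n₂ : ℚ) * ((m : ℚ) * ((m : ℚ) + 1)) / 2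
      = vdim d (k + 1) n₁ + n₁ * vdim k m n₂ := by
    rw [← vdim_mul d k m n₁ n₂, vdim_natCast, Nat.cast_mul]
  subst hT
  rw [← vdim_natCast k m n₂, ← vdim_natCast d k n₁, hE, ← vdim_succ_add d k n₁, ← hC]
  exact ⟨intersectionDim_of_nonneg_of_nonneg hn hs, intersectionDim_of_nonneg_of_nonpos hn hs,
    intersectionDim_of_nonpos_of_nonneg hs, intersectionDim_of_nonpos_of_nonpos hn,
    intersectionDim_eq_zero hn hs⟩

/-- **Claim 2.** The dimension
`T = max(0, dim Im ρ_Y + dim Im (r₁,…,r_{n₁}) − n₁(k+1))`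
of the (proper, by the Generalized Transversality Lemma) intersection of the images
of the restriction maps, in the five cases determined by the signs of the relevant
virtual dimensions. -/
theorem claim2 (d k m n₁ n₂ : ℕ) (hn₁ : 1 ≤ n₁) (hn₂ : 1 ≤ n₂)
    (T : ℚ)
    (hT : T = max 0 (max 0 (vdim d k n₁) - max 0 (vdim d (k + 1) n₁)
      + (n₁ : ℚ) * (max 0 (vdim k m n₂) - max 0 (vdim ((k : ℤ) - 1) m n₂))
      - (n₁ : ℚ) * ((k : ℚ) + 1))) :
    (0 ≤ vdim d (k + 1) n₁ → 0 ≤ vdim ((k : ℤ) - 1) m n₂ →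
      T = (n₁ : ℚ) * ((k : ℚ) + 1)) ∧
    (0 ≤ vdim d (k + 1) n₁ → 0 ≤ vdim k m n₂ → vdim ((k : ℤ) - 1) m n₂ ≤ 0 →
      T = (n₁ : ℚ) * ((k : ℚ) * ((k : ℚ) + 3) / 2 + 1
        - (n₂ : ℚ) * ((m : ℚ) * ((m : ℚ) + 1)) / 2)) ∧
    (0 ≤ vdim d k n₁ → vdim d (k + 1) n₁ ≤ 0 → 0 ≤ vdim ((k : ℤ) - 1) m n₂ →
      T = (d : ℚ) * ((d : ℚ) + 3) / 2 + 1 - (n₁ : ℚ) * ((k : ℚ) * ((k : ℚ) + 1)) / 2) ∧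
    (vdim d (k + 1) n₁ ≤ 0 → vdim ((k : ℤ) - 1) m n₂ ≤ 0 →
      0 ≤ (d : ℚ) * ((d : ℚ) + 3) / 2 + 1
        - (n₁ : ℚ) * (n₂ : ℚ) * ((m : ℚ) * ((m : ℚ) + 1)) / 2 →
      T = (d : ℚ) * ((d : ℚ) + 3) / 2 + 1
        - (n₁ : ℚ) * (n₂ : ℚ) * ((m : ℚ) * ((m : ℚ) + 1)) / 2) ∧
    (¬(0 ≤ vdim d (k + 1) n₁ ∧ 0 ≤ vdim ((k : ℤ) - 1) m n₂) →
     ¬(0 ≤ vdim d (k + 1) n₁ ∧ 0 ≤ vdim k m n₂ ∧ vdim ((k : ℤ) - 1) m n₂ ≤ 0) →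
     ¬(0 ≤ vdim d k n₁ ∧ vdim d (k + 1) n₁ ≤ 0 ∧ 0 ≤ vdim ((k : ℤ) - 1) m n₂) →
     ¬(vdim d (k + 1) n₁ ≤ 0 ∧ vdim ((k : ℤ) - 1) m n₂ ≤ 0 ∧
        0 ≤ (d : ℚ) * ((d : ℚ) + 3) / 2 + 1
          - (n₁ : ℚ) * (n₂ : ℚ) * ((m : ℚ) * ((m : ℚ) + 1)) / 2) →
      T = 0) :=
  claim2_general d k m n₁ n₂ T hT
end

section
/- (Claim 3, nonempty case) Let d ≥ 0, k ≥ 0, m ≥ 0 and n₁ ≥ 1, n₂ ≥ 1 be integers. Define S = max(0, v(d, k+1, n₁)) + n₁·max(0, v(k−1, m, n₂)) + max(0, max(0, v(d, k, n₁)) − max(0, v(d, k+1, n₁)) + n₁·(max(0, v(k, m, n₂)) − max(0, v(k−1, m, n₂))) − n₁(k+1)). If one of the following four conditions holds: (i) v(d, k+1, n₁) ≥ 0 and v(k−1, m, n₂) ≥ 0; (ii) v(d, k+1, n₁) ≥ 0, v(k−1, m, n₂) ≤ 0 and v(k, m, n₂) ≥ 0; (iii) v(d, k+1, n₁) ≤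 0, v(k−1, m, n₂) ≥ 0 and v(d, k, n₁) ≥ 0; (iv) v(d, k+1, n₁) ≤ 0, v(k−1, m, n₂) ≤ 0 and d(d+3)/2 + 1 − n₁n₂·m(m+1)/2 ≥ 0; then S = d(d+3)/2 + 1 − n₁n₂·m(m+1)/2. -/
/-!
Write `a = v(d, k+1, n₁)`, `b = v(k−1, m, n₂)`, `c = v(d, k, n₁)`, `e = v(k, m, n₂)`. Then
`c = a + n₁(k+1)`, `e = b + (k+1)` and `a + n₁e = d(d+3)/2 + 1 − n₁n₂·m(m+1)/2`. Each of the
conditions (i)–(iv) forces `c, e ≥ 0` and `a⁺ + n₁b⁺ ≤ a + n₁e`; then the argument of the last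
`max` in `S` is `a + n₁e − a⁺ − n₁b⁺ ≥ 0`, and `S` telescopes to `a + n₁e`.
-/

theorem vdim_eq_vdim_succ_add (δ : ℤ) (μ ν : ℕ) :
    vdim δ μ ν = vdim δ (μ + 1) ν + (ν : ℚ) * ((μ : ℚ) + 1) := by
  unfold vdim; push_cast; ring

theorem vdim_eq_vdim_sub_one_add (δ : ℤ) (μ ν : ℕ) :
    vdim δ μ ν = vdim (δ - 1) μ ν + ((δ : ℚ) + 1) := by
  unfold vdim; push_cast; ring

theorem vdim_succ_add_mul_vdim (δ : ℤ) (μ m ν ν' : ℕ) :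
    vdim δ (μ + 1) ν + (ν : ℚ) * vdim μ m ν' = vdim δ m (ν * ν') := by
  unfold vdim; push_cast; ring

section Telescoping

variable {R : Type*} [CommRing R] [LinearOrder R] [IsStrictOrderedRing R]

theorem max_zero_add_mul_max_zero_add_max_zero_eq {a b c e n t : R}
    (hc : c = a + n * t) (hc₀ : 0 ≤ c) (he₀ : 0 ≤ e)
    (hle : max 0 a + n * max 0 b ≤ a + n * e) :
    max 0 a + n * max 0 b
      + max 0 (max 0 c - max 0 a + n * (max 0 e - max 0 b) - n * t) = a + n * e := by
  have hrest : max 0 c - max 0 a + n * (max 0 e - max 0 b) - n * t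
      = a + n * e - (max 0 a + n * max 0 b) := by
    rw [max_eq_right hc₀, max_eq_right he₀, hc]; ring
  rw [hrest, max_eq_right (sub_nonneg.mpr hle)]
  ring

theorem max_zero_add_mul_max_zero_add_max_zero_eq_of_cases {a b c e n t : R}
    (hc : c = a + n * t) (he : e = b + t) (hn : 0 < n) (ht : 0 ≤ t)
    (hcases : (0 ≤ a ∧ 0 ≤ b) ∨ (0 ≤ a ∧ b ≤ 0 ∧ 0 ≤ e) ∨ (a ≤ 0 ∧ 0 ≤ b ∧ 0 ≤ c) ∨
      (a ≤ 0 ∧ b ≤ 0 ∧ 0 ≤ a + n * e)) :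
    max 0 a + n * max 0 b
      + max 0 (max 0 c - max 0 a + n * (max 0 e - max 0 b) - n * t) = a + n * e := by
  have hnt : 0 ≤ n * t := mul_nonneg hn.le ht
  rcases hcases with ⟨ha, hb⟩ | ⟨ha, hb, he₀⟩ | ⟨ha, hb, hc₀⟩ | ⟨ha, hb, hT⟩
  · refine max_zero_add_mul_max_zero_add_max_zero_eq hc (by linarith) (by linarith) ?_
    rw [max_eq_right ha, max_eq_right hb, he]
    nlinarith
  · refine max_zero_add_mul_max_zero_add_max_zero_eq hc (by linarith) he₀ ?_
    rw [max_eq_right ha, max_eq_left hb]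
    nlinarith [mul_nonneg hn.le he₀]
  · refine max_zero_add_mul_max_zero_add_max_zero_eq hc hc₀ (by linarith) ?_
    rw [max_eq_left ha, max_eq_right hb, he]
    linarith
  · have he₀ : 0 ≤ e := nonneg_of_mul_nonneg_right (by linarith) hn
    refine max_zero_add_mul_max_zero_add_max_zero_eq hc ?_ he₀ ?_
    · nlinarith [mul_nonneg hn.le (neg_nonneg.mpr hb)]
    · rw [max_eq_left ha, max_eq_left hb]
      linarith

end Telescoping

theorem claim3_nonempty_general (d k m n₁ n₂ : ℕ) (hn₁ : 1 ≤ n₁)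
    (S : ℚ)
    (hS : S = max 0 (vdim d (k + 1) n₁) + (n₁ : ℚ) * max 0 (vdim ((k : ℤ) - 1) m n₂)
      + max 0 (max 0 (vdim d k n₁) - max 0 (vdim d (k + 1) n₁)
          + (n₁ : ℚ) * (max 0 (vdim k m n₂) - max 0 (vdim ((k : ℤ) - 1) m n₂))
          - (n₁ : ℚ) * ((k : ℚ) + 1)))
    (hcond :
      (0 ≤ vdim d (k + 1) n₁ ∧ 0 ≤ vdim ((k : ℤ) - 1) m n₂) ∨
      (0 ≤ vdim d (k + 1) n₁ ∧ vdim ((k : ℤ) - 1) m n₂ ≤ 0 ∧ 0 ≤ vdim k m n₂) ∨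
      (vdim d (k + 1) n₁ ≤ 0 ∧ 0 ≤ vdim ((k : ℤ) - 1) m n₂ ∧ 0 ≤ vdim d k n₁) ∨
      (vdim d (k + 1) n₁ ≤ 0 ∧ vdim ((k : ℤ) - 1) m n₂ ≤ 0 ∧
        0 ≤ (d : ℚ) * ((d : ℚ) + 3) / 2 + 1
          - (n₁ : ℚ) * (n₂ : ℚ) * ((m : ℚ) * ((m : ℚ) + 1)) / 2)) :
    S = (d : ℚ) * ((d : ℚ) + 3) / 2 + 1
      - (n₁ : ℚ) * (n₂ : ℚ) * ((m : ℚ) * ((m : ℚ) + 1)) / 2 := by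
  have htotal : vdim d (k + 1) n₁ + (n₁ : ℚ) * vdim k m n₂
      = (d : ℚ) * ((d : ℚ) + 3) / 2 + 1
        - (n₁ : ℚ) * (n₂ : ℚ) * ((m : ℚ) * ((m : ℚ) + 1)) / 2 := by
    rw [vdim_succ_add_mul_vdim]
    simp only [vdim, Nat.cast_mul, Int.cast_natCast]
  have he : vdim k m n₂ = vdim ((k : ℤ) - 1) m n₂ + ((k : ℚ) + 1) := by
    rw [vdim_eq_vdim_sub_one_add, Int.cast_natCast]
  rw [← htotal] at hcond ⊢
  rw [hS]
  exact max_zero_add_mul_max_zero_add_max_zero_eq_of_cases (vdim_eq_vdim_succ_add d k n₁) he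
    (by exact_mod_cast hn₁) (by positivity) hcond

/-- **Claim 3, nonempty case.** The dimension `S` of the limit system `L₀`
(kernels plus intersection of images) equals the virtual dimension
`d(d+3)/2 + 1 − n₁n₂·m(m+1)/2` under any of the four conditions (i)–(iv). -/
theorem claim3_nonempty (d k m n₁ n₂ : ℕ) (hn₁ : 1 ≤ n₁) (hn₂ : 1 ≤ n₂)
    (S : ℚ)
    (hS : S = max 0 (vdim d (k + 1) n₁) + (n₁ : ℚ) * max 0 (vdim ((k : ℤ) - 1) m n₂)
      + max 0 (max 0 (vdim d k n₁) - max 0 (vdim d (k + 1) n₁)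
          + (n₁ : ℚ) * (max 0 (vdim k m n₂) - max 0 (vdim ((k : ℤ) - 1) m n₂))
          - (n₁ : ℚ) * ((k : ℚ) + 1)))
    (hcond :
      (0 ≤ vdim d (k + 1) n₁ ∧ 0 ≤ vdim ((k : ℤ) - 1) m n₂) ∨
      (0 ≤ vdim d (k + 1) n₁ ∧ vdim ((k : ℤ) - 1) m n₂ ≤ 0 ∧ 0 ≤ vdim k m n₂) ∨
      (vdim d (k + 1) n₁ ≤ 0 ∧ 0 ≤ vdim ((k : ℤ) - 1) m n₂ ∧ 0 ≤ vdim d k n₁) ∨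
      (vdim d (k + 1) n₁ ≤ 0 ∧ vdim ((k : ℤ) - 1) m n₂ ≤ 0 ∧
        0 ≤ (d : ℚ) * ((d : ℚ) + 3) / 2 + 1
          - (n₁ : ℚ) * (n₂ : ℚ) * ((m : ℚ) * ((m : ℚ) + 1)) / 2)) :
    S = (d : ℚ) * ((d : ℚ) + 3) / 2 + 1
      - (n₁ : ℚ) * (n₂ : ℚ) * ((m : ℚ) * ((m : ℚ) + 1)) / 2 :=
  claim3_nonempty_general d k m n₁ n₂ hn₁ S hS hcond
end
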